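/- Let h, k, c be natural numbers with c ≥ 1, 1 ≤ k ≤ 2^h, and suppose k = 2^{ν(k)} is a power of 2 (i.e., σ(k) = 1); set u = k. Then ν(S(c·2^h + u, k)) = 0. -/

import Mathlib

/-!
Reducing the recurrence `S(n+1, k+1) = (k+1) S(n, k+1) + S(n, k)` modulo 2 (where the factor
`k+1` is `0` or `1`) gives the classical parity formula `S(k+1+d, k+1) ≡ C(d + ⌊k/2⌋, ⌊k/2⌋)`,
because the two cases reproduce Pascal's rule. With `d = c·2^h` and `k + 1 ≤ 2^h`, so that
`⌊k/2⌋ < 2^h`, Lucas's theorem shows that this binomial coefficient is odd.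
-/

/-- Stirling numbers of the second kind. -/
def stirling2 : ℕ → ℕ → ℕ
  | 0, 0 => 1
  | 0, _ + 1 => 0
  | _ + 1, 0 => 0
  | n + 1, k + 1 => (k + 1) * stirling2 n (k + 1) + stirling2 n k

/-- Sum of base-2 digits. -/
def sigma2 (n : ℕ) : ℕ := (Nat.digits 2 n).sum

/-- The set of powers of 2 appearing in the binary expansion of `n`. -/
def twoPows (n : ℕ) : Finset ℕ := (Nat.bitIndices n).toFinset.image (2 ^ ·)

theorem stirling2_eq_stirlingSecond : stirling2 = Nat.stirlingSecond := by
  funext n k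
  induction n generalizing k with
  | zero => cases k <;> rfl
  | succ n ih =>
    cases k with
    | zero => rfl
    | succ k => simp only [stirling2, Nat.stirlingSecond_succ_succ, ih]

namespace Nat

theorem stirlingSecond_succ_add_modEq_choose (k d : ℕ) :
    stirlingSecond (k + 1 + d) (k + 1) ≡ (d + k / 2).choose (k / 2) [MOD 2] := by
  rw [← ZMod.natCast_eq_natCast_iff]
  induction d generalizing k with
  | zero => simp [stirlingSecond_self]
  | succ d ihd =>
    induction k with
    | zero => simp [add_comm 1, stirlingSecond_one_right]
    | succ k ihk =>
      rw [show k + 1 + 1 + (d + 1) = k + 1 + 1 + d + 1 by ring, stirlingSecond_succ_succ,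
        Nat.cast_add, Nat.cast_mul, ihd, show k + 1 + 1 + d = k + 1 + (d + 1) by ring, ihk]
      obtain ⟨m, rfl | rfl⟩ := Nat.even_or_odd' k
      · have hzero : ((2 * m + 1 + 1 : ℕ) : ZMod 2) = 0 :=
          ZMod.natCast_eq_zero_iff_even.2 ⟨m + 1, by ring⟩
        rw [hzero, show (2 * m + 1) / 2 = m by omega, show 2 * m / 2 = m by omega]
        ring
      · have hone : ((2 * m + 1 + 1 + 1 : ℕ) : ZMod 2) = 1 :=
          ZMod.natCast_eq_one_iff_odd.2 ⟨m + 1, by ring⟩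
        rw [hone, show (2 * m + 1 + 1) / 2 = m + 1 by omega, show (2 * m + 1) / 2 = m by omega,
          show d + 1 + (m + 1) = d + 1 + m + 1 by ring, choose_succ_succ', Nat.cast_add, one_mul,
          add_comm, show d + (m + 1) = d + 1 + m by ring]

theorem choose_mul_pow_add_modEq_one {p : ℕ} [Fact p.Prime] (c : ℕ) {h r : ℕ}
    (hr : r < p ^ h) : (c * p ^ h + r).choose r ≡ 1 [MOD p] := by
  induction h generalizing r with
  | zero => simp_all [Nat.ModEq.refl]
  | succ h ih =>
    have hp : 0 < p := (Fact.out : p.Prime).pos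
    have hsplit : c * p ^ (h + 1) + r = r % p + p * (c * p ^ h + r / p) := by
      rw [pow_succ]; nth_rw 1 [← mod_add_div r p]; ring
    refine Choose.choose_modEq_choose_mod_mul_choose_div_nat.trans ?_
    rw [hsplit, add_mul_mod_self_left, mod_mod, add_mul_div_left _ _ hp,
      div_eq_of_lt (mod_lt r hp), choose_self, zero_add, one_mul]
    exact ih (by rw [pow_succ] at hr; exact Nat.div_lt_of_lt_mul (by linarith))

end Nat

theorem stmt_17_general (h k c : ℕ) (hk : 1 ≤ k) (hk2 : k ≤ 2 ^ h) :
    padicValNat 2 (stirling2 (c * 2 ^ h + k) k) = 0 := by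
  obtain ⟨j, rfl⟩ := Nat.exists_eq_add_of_le' hk
  have hodd : stirling2 (c * 2 ^ h + (j + 1)) (j + 1) ≡ 1 [MOD 2] := by
    rw [stirling2_eq_stirlingSecond, add_comm]
    exact (Nat.stirlingSecond_succ_add_modEq_choose j _).trans
      (Nat.choose_mul_pow_add_modEq_one c (by omega))
  exact padicValNat.eq_zero_of_not_dvd fun h2 => by
    simp [Nat.ModEq, Nat.mod_eq_zero_of_dvd h2] at hodd

theorem stmt_17 (h k c : ℕ) (hc : 1 ≤ c) (hk : 1 ≤ k) (hk2 : k ≤ 2 ^ h)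
    (hpow : k = 2 ^ padicValNat 2 k) :
    padicValNat 2 (stirling2 (c * 2 ^ h + k) k) = 0 :=
  stmt_17_general h k c hk hk2
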